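/- arXiv:2509.15074 — 2 statements merged into one kernel-verified Lean document; each statement's English description precedes it below -/
import Mathlib

section
/- For every loop-free ReDiP program P (including iid statements) and every PGA A over V, the translated automaton ⟦P⟧(A) is again a PGA over V; that is, the translation of Table 2 is an endofunction on probability generating automata (mass(⟦P⟧(A)) ≤ 1 whenever mass(A) ≤ 1). -/
open scoped ENNReal
open Classical

/-- Weighted automata over a commutative alphabet `V` with weights in `ℝ≥0∞`. -/
structure WA (V : Type) where
  Q : Type
  [fin : Fintype Q]
  [dec : DecidableEq Q]
  w : Q → Q → ℝ≥0∞
  lab : Q → Q → Option V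
  I : Q → ℝ≥0∞
  F : Q → ℝ≥0∞

attribute [instance] WA.fin WA.dec

variable {V : Type} [Fintype V] [DecidableEq V]

/-- Weight of a path of length `n`. -/
noncomputable def WA.pathWeight (A : WA V) {n : ℕ} (p : Fin (n + 1) → A.Q) : ℝ≥0∞ :=
  A.I (p 0) * (∏ i : Fin n, A.w (p i.castSucc) (p i.succ)) * A.F (p (Fin.last n))

/-- Parikh image of a path: the number of `X`-labeled transitions, for each `X : V`. -/
def WA.parikh (A : WA V) {n : ℕ} (p : Fin (n + 1) → A.Q) : V → ℕ := fun X =>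
  (Finset.univ.filter fun i : Fin n => A.lab (p i.castSucc) (p i.succ) = some X).card

/-- Behavior of a weighted automaton, as a map from valuations to `ℝ≥0∞`. -/
noncomputable def WA.behavior (A : WA V) (σ : V → ℕ) : ℝ≥0∞ :=
  ∑' (n : ℕ) (p : {p : Fin (n + 1) → A.Q // A.parikh p = σ}), A.pathWeight p.1

/-- Total mass of a weighted automaton. -/
noncomputable def WA.mass (A : WA V) : ℝ≥0∞ :=
  ∑' σ : V → ℕ, A.behavior σ

/-- Number of transitions with nonzero weight. -/
noncomputable def WA.size (A : WA V) : ℕ :=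
  Nat.card {qr : A.Q × A.Q // A.w qr.1 qr.2 ≠ 0}

/-- Deterministic finite automata over alphabet `V` with a finite state type. -/
structure DFA' (V : Type) where
  S : Type
  [fin : Fintype S]
  [dec : DecidableEq S]
  step : S → V → S
  start : S
  accept : Finset S

attribute [instance] DFA'.fin DFA'.dec

def DFA'.Accepts (B : DFA' V) (w : List V) : Prop :=
  w.foldl B.step B.start ∈ B.accept

/-- The language of `B` is closed under permutations of letters. -/
def DFA'.PermClosed (B : DFA' V) : Prop :=
  ∀ w₁ w₂ : List V, w₁.Perm w₂ → (B.Accepts w₁ ↔ B.Accepts w₂)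

/-- Parikh image of a word. -/
def parikhWord (w : List V) : V → ℕ := fun X => w.count X

/-- Product of a weighted automaton with a DFA. -/
noncomputable def WA.prodDFA (A : WA V) (B : DFA' V) : WA V where
  Q := A.Q × B.S
  w := fun a b =>
    match A.lab a.1 b.1 with
    | some X => if b.2 = B.step a.2 X then A.w a.1 b.1 else 0
    | none => if b.2 = a.2 then A.w a.1 b.1 else 0
  lab := fun a b => A.lab a.1 b.1
  I := fun a => if a.2 = B.start then A.I a.1 else 0
  F := fun a => if a.2 ∈ B.accept then A.F a.1 else 0

/-- `A[X/1]`: relabel every `X`-transition to an `ε`-transition. -/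
def WA.subst1 (A : WA V) (X : V) : WA V :=
  { A with lab := fun q r => if A.lab q r = some X then none else A.lab q r }

/-- `A[X/0]`: set the weight of every `X`-labeled transition to `0`. -/
def WA.subst0 (A : WA V) (X : V) : WA V :=
  { A with w := fun q r => if A.lab q r = some X then 0 else A.w q r }

/-- Weighted disjoint union `A₁ ⊕_{p,q} A₂`. -/
noncomputable def WA.wsum (p q : ℝ≥0∞) (A₁ A₂ : WA V) : WA V where
  Q := A₁.Q ⊕ A₂.Q
  w := fun a b =>
    match a, b with
    | .inl q, .inl r => A₁.w q r
    | .inr q, .inr r => A₂.w q r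
    | _, _ => 0
  lab := fun a b =>
    match a, b with
    | .inl q, .inl r => A₁.lab q r
    | .inr q, .inr r => A₂.lab q r
    | _, _ => none
  I := Sum.elim (fun s => p * A₁.I s) (fun s => q * A₂.I s)
  F := Sum.elim A₁.F A₂.F

/-- Concatenation `A₁ • A₂`. -/
noncomputable def WA.concat (A₁ A₂ : WA V) : WA V where
  Q := A₁.Q ⊕ A₂.Q
  w := fun a b =>
    match a, b with
    | .inl q, .inl r => A₁.w q r
    | .inr s, .inr t => A₂.w s t
    | .inl q, .inr s => A₁.F q * A₂.I s
    | .inr _, .inl _ => 0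
  lab := fun a b =>
    match a, b with
    | .inl q, .inl r => A₁.lab q r
    | .inr s, .inr t => A₂.lab s t
    | _, _ => none
  I := Sum.elim A₁.I (fun _ => 0)
  F := Sum.elim (fun _ => 0) A₂.F

/-- Transition substitution `A₁[Y/A₂]`. -/
noncomputable def WA.tsubst (A₁ : WA V) (Y : V) (A₂ : WA V) : WA V where
  Q := A₁.Q ⊕ (A₁.Q × A₁.Q × A₂.Q)
  w := fun a b =>
    match a, b with
    | .inl q, .inl r => if A₁.lab q r = some Y then 0 else A₁.w q r
    | .inl q, .inr (q', r, s) =>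
        if q' = q ∧ A₁.lab q r = some Y then A₁.w q r * A₂.I s else 0
    | .inr (q, r, s), .inr (q', r', t) =>
        if q' = q ∧ r' = r then A₂.w s t else 0
    | .inr (q, r, s), .inl r' =>
        if r' = r ∧ A₁.lab q r = some Y then A₂.F s else 0
  lab := fun a b =>
    match a, b with
    | .inl q, .inl r => A₁.lab q r
    | .inr (_, _, s), .inr (_, _, t) => A₂.lab s t
    | _, _ => none
  I := Sum.elim A₁.I (fun _ => 0)
  F := Sum.elim A₁.F (fun _ => 0)

/-- The guard DFA `B_{X>0}`. -/
def BXpos (X : V) : DFA' V where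
  S := Bool
  step := fun s a => if a = X then true else s
  start := false
  accept := {true}

/-- The decrement automaton `A^{X--}`. -/
noncomputable def WA.decrA (A : WA V) (X : V) : WA V :=
  let P := A.prodDFA (BXpos X)
  WA.wsum 1 1
    { P with
      lab := fun a b =>
        if a.2 = false ∧ b.2 = true ∧ P.lab a b = some X then none else P.lab a b }
    (A.subst0 X)

/-- Convolution of two maps `(V → ℕ) → ℝ≥0∞`. -/
noncomputable def conv (f g : (V → ℕ) → ℝ≥0∞) : (V → ℕ) → ℝ≥0∞ := fun σ =>
  ∑' p : {p : (V → ℕ) × (V → ℕ) // p.1 + p.2 = σ}, f p.1.1 * g p.1.2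

/-- Indicator (Dirac) function of a valuation. -/
noncomputable def delta (τ : V → ℕ) : (V → ℕ) → ℝ≥0∞ := fun σ => if σ = τ then 1 else 0

/-- `k`-fold convolution power. -/
noncomputable def convPow (g : (V → ℕ) → ℝ≥0∞) : ℕ → ((V → ℕ) → ℝ≥0∞)
  | 0 => delta 0
  | k + 1 => conv (convPow g k) g

/-- Rectangular guards over `V`. -/
inductive Guard (V : Type) : Type where
  | lt : V → ℕ → Guard V
  | mod : V → (n m : ℕ) → n < m → Guard V
  | and : Guard V → Guard V → Guard V
  | not : Guard V → Guard V

/-- Satisfaction of a guard by a valuation. -/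
def Guard.sat : Guard V → (V → ℕ) → Prop
  | .lt X n, σ => σ X < n
  | .mod X n m _, σ => σ X % m = n
  | .and g₁ g₂, σ => g₁.sat σ ∧ g₂.sat σ
  | .not g, σ => ¬g.sat σ

/-- Number of atomic subformulas. -/
def Guard.atoms : Guard V → ℕ
  | .lt _ _ => 1
  | .mod _ _ _ _ => 1
  | .and g₁ g₂ => g₁.atoms + g₂.atoms
  | .not g => g.atoms

/-- All constants in the guard are at most `N`. -/
def Guard.constLe (N : ℕ) : Guard V → Prop
  | .lt _ n => n ≤ N
  | .mod _ n m _ => n ≤ N ∧ m ≤ N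
  | .and g₁ g₂ => g₁.constLe N ∧ g₂.constLe N
  | .not g => g.constLe N

/-- The counting DFA for `X < n`. -/
def ltDFA (X : V) (n : ℕ) : DFA' V where
  S := Fin (n + 1)
  step := fun s a => if a = X then (if h : s.1 < n then ⟨s.1 + 1, by omega⟩ else s) else s
  start := ⟨0, by omega⟩
  accept := Finset.univ.filter fun s => s.1 < n

/-- The counting DFA for `X ≡ n mod m`. -/
def modDFA (X : V) (n m : ℕ) (h : n < m) : DFA' V where
  S := Fin m
  step := fun s a => if a = X then ⟨(s.1 + 1) % m, Nat.mod_lt _ (by omega)⟩ else s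
  start := ⟨0, by omega⟩
  accept := {⟨n, h⟩}

/-- Product DFA. -/
def DFA'.inter (B C : DFA' V) : DFA' V where
  S := B.S × C.S
  step := fun s a => (B.step s.1 a, C.step s.2 a)
  start := (B.start, C.start)
  accept := B.accept ×ˢ C.accept

/-- Complement DFA. -/
def DFA'.compl (B : DFA' V) : DFA' V :=
  { B with accept := B.acceptᶜ }

/-- The guard DFA `B_φ`. -/
def Guard.dfa : Guard V → DFA' V
  | .lt X n => ltDFA X n
  | .mod X n m h => modDFA X n m h
  | .and g₁ g₂ => g₁.dfa.inter g₂.dfa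
  | .not g => g.dfa.compl

/-- Loop-free ReDiP programs; distributions are given by weighted automata. -/
inductive ReDiP (V : Type) : Type 1 where
  | setzero : V → ReDiP V
  | incrConst : V → ℕ → ReDiP V
  | incrDist : V → WA V → ReDiP V
  | incrVar : V → V → ReDiP V
  | iid : V → WA V → V → ReDiP V
  | decr : V → ReDiP V
  | choice : ℝ≥0∞ → ReDiP V → ReDiP V → ReDiP V
  | ite : Guard V → ReDiP V → ReDiP V → ReDiP V
  | observe : Guard V → ReDiP V
  | seq : ReDiP V → ReDiP V → ReDiP V

/-- A distribution automaton for variable `x`: mass exactly `1` and supported on `x`. -/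
def distWf (x : V) (D : WA V) : Prop :=
  D.mass = 1 ∧ ∀ σ : V → ℕ, D.behavior σ ≠ 0 → ∀ y : V, y ≠ x → σ y = 0

/-- Well-formedness of a ReDiP program. -/
def ReDiP.wf : ReDiP V → Prop
  | .incrDist x D => distWf x D
  | .iid x D _ => distWf x D
  | .choice p P₁ P₂ => p ≤ 1 ∧ P₁.wf ∧ P₂.wf
  | .ite _ P₁ P₂ => P₁.wf ∧ P₂.wf
  | .seq P₁ P₂ => P₁.wf ∧ P₂.wf
  | _ => True

/-- `P` contains no `iid` statements. -/
def ReDiP.noIid : ReDiP V → Prop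
  | .iid _ _ _ => False
  | .choice _ P₁ P₂ => P₁.noIid ∧ P₂.noIid
  | .ite _ P₁ P₂ => P₁.noIid ∧ P₂.noIid
  | .seq P₁ P₂ => P₁.noIid ∧ P₂.noIid
  | _ => True

/-- Program size. -/
def ReDiP.size : ReDiP V → ℕ
  | .choice _ P₁ P₂ => 1 + P₁.size + P₂.size
  | .ite _ P₁ P₂ => 1 + P₁.size + P₂.size
  | .seq P₁ P₂ => P₁.size + P₂.size
  | _ => 1

/-- The `(n+1)`-state chain of `X`-transitions (Dirac distribution `δ_n` on `X`). -/
noncomputable def chainX (X : V) (n : ℕ) : WA V where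
  Q := Fin (n + 1)
  w := fun i j => if j.1 = i.1 + 1 then 1 else 0
  lab := fun i j => if j.1 = i.1 + 1 then some X else none
  I := fun i => if i = ⟨0, by omega⟩ then 1 else 0
  F := fun i => if i = Fin.last n then 1 else 0

/-- The three-state chain with one `Y`-transition followed by one `X`-transition. -/
noncomputable def chainYX (Y X : V) : WA V where
  Q := Fin 3
  w := fun i j => if j.1 = i.1 + 1 then 1 else 0
  lab := fun i j => if j.1 = i.1 + 1 then (if i.1 = 0 then some Y else some X) else none
  I := fun i => if i = 0 then 1 else 0
  F := fun i => if i = Fin.last 2 then 1 else 0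

/-- The two-state automaton with a single `Y`-transition. -/
noncomputable def singleY (Y : V) : WA V := chainX Y 1

/-- The automata translation of a ReDiP program (Table 2). -/
noncomputable def ReDiP.sem : ReDiP V → WA V → WA V
  | .setzero x, A => A.subst1 x
  | .incrConst x n, A => A.concat (chainX x n)
  | .incrDist _ D, A => A.concat D
  | .incrVar x y, A => A.tsubst y (chainYX y x)
  | .iid _ D y, A => A.tsubst y ((singleY y).concat D)
  | .decr x, A => A.decrA x
  | .choice p P₁ P₂, A => WA.wsum p (1 - p) (P₁.sem A) (P₂.sem A)
  | .ite φ P₁ P₂, A =>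
      WA.wsum 1 1 (P₁.sem (A.prodDFA φ.dfa)) (P₂.sem (A.prodDFA (Guard.not φ).dfa))
  | .observe φ, A => A.prodDFA φ.dfa
  | .seq P₁ P₂, A => P₂.sem (P₁.sem A)

/-- The parameters (distribution automata sizes, constants, guard atoms) of `P` are
bounded by `d`, `N` and `η`, respectively. -/
def ReDiP.boundedBy (d N η : ℕ) : ReDiP V → Prop
  | .setzero _ => True
  | .incrConst _ n => n ≤ N
  | .incrDist _ D => D.size ≤ d
  | .incrVar _ _ => True
  | .iid _ D _ => D.size ≤ d
  | .decr _ => True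
  | .choice _ P₁ P₂ => P₁.boundedBy d N η ∧ P₂.boundedBy d N η
  | .ite φ P₁ P₂ =>
      φ.atoms ≤ η ∧ φ.constLe N ∧ P₁.boundedBy d N η ∧ P₂.boundedBy d N η
  | .observe φ => φ.atoms ≤ η ∧ φ.constLe N
  | .seq P₁ P₂ => P₁.boundedBy d N η ∧ P₂.boundedBy d N η

/-- Configurations of the operational Markov chain. -/
inductive Conf (V : Type) : Type 1 where
  | run : ReDiP V → (V → ℕ) → Conf V
  | term : (V → ℕ) → Conf V
  | err : Conf V

/-- One-step transition probabilities of the operational Markov chain from `⟨P, σ⟩`. -/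
noncomputable def pstep : ReDiP V → (V → ℕ) → Conf V → ℝ≥0∞
  | .setzero x, σ, c => if c = Conf.term (Function.update σ x 0) then 1 else 0
  | .incrConst x n, σ, c => if c = Conf.term (Function.update σ x (σ x + n)) then 1 else 0
  | .incrDist x D, σ, c =>
      ∑' n : ℕ,
        if c = Conf.term (Function.update σ x (σ x + n)) then
          D.behavior (fun y => if y = x then n else 0)
        else 0
  | .incrVar x y, σ, c => if c = Conf.term (Function.update σ x (σ x + σ y)) then 1 else 0
  | .iid _ _ _, _, _ => 0
  | .decr x, σ, c => if c = Conf.term (Function.update σ x (σ x - 1)) then 1 else 0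
  | .choice p P₁ P₂, σ, c =>
      (if c = Conf.run P₁ σ then p else 0) + (if c = Conf.run P₂ σ then 1 - p else 0)
  | .ite φ P₁ P₂, σ, c =>
      if φ.sat σ then (if c = Conf.run P₁ σ then 1 else 0)
      else (if c = Conf.run P₂ σ then 1 else 0)
  | .observe φ, σ, c =>
      if φ.sat σ then (if c = Conf.term σ then 1 else 0)
      else (if c = Conf.err then 1 else 0)
  | .seq P₁ P₂, σ, c =>
      match c with
      | .run Q σ' =>
          (if Q = P₂ then pstep P₁ σ (Conf.term σ') else 0) +
          (match Q with
           | .seq P₁' P₂' => if P₂' = P₂ then pstep P₁ σ (Conf.run P₁' σ') else 0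
           | _ => 0)
      | .term _ => 0
      | .err => pstep P₁ σ Conf.err

/-- Transition probabilities between configurations (terminal and error states are absorbing
with no outgoing transitions). -/
noncomputable def cstep : Conf V → Conf V → ℝ≥0∞
  | .run P σ, c => pstep P σ c
  | _, _ => 0

/-- Initial distribution of the operational Markov chain `M(A, P)`. -/
noncomputable def mcInit (A : WA V) (P : ReDiP V) : Conf V → ℝ≥0∞
  | .run P' σ => if P' = P then A.behavior σ else 0
  | _ => 0

/-- Reachability probability `Pr^{M(A,P)}(◇ t)`: the sum over all finite sequences of
configurations ending at `t` and avoiding `t` before, of the initial weight of the first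
configuration times the product of the transition probabilities. -/
noncomputable def reachProb (A : WA V) (P : ReDiP V) (t : Conf V) : ℝ≥0∞ :=
  ∑' (k : ℕ)
      (p : {p : Fin (k + 1) → Conf V //
            p (Fin.last k) = t ∧ ∀ i : Fin k, p i.castSucc ≠ t}),
    mcInit A P (p.1 0) * ∏ i : Fin k, cstep (p.1 i.castSucc) (p.1 i.succ)

/-!
Summing path weights length by length, the mass of a weighted automaton is `I ⬝ᵥ W⋆ *ᵥ F`, where
`W⋆ = ∑ₙ Wⁿ` is the Kleene star of its weight matrix `W`. By induction on the program it suffices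
that no construction of the translation increases the mass (for `⊕_{p,1-p}`: the average of two
masses). Relabelling leaves the weights untouched. A DFA is deterministic and total, so the products
of `A` with `B` and with its complement split the mass of `A`, and `A[x/0]` embeds into the product
with the complement of `B_{x>0}`. For `⊕`, `•` and `A₁[y/A₂]` the weight matrix has block form, and
the star of a block matrix is bounded through the star of the Schur complement; for `A₁[y/A₂]` the
copies of `A₂` collapse there into a factor `mass A₂ ≤ 1` on every `y`-transition.
-/

open Matrix
open scoped Kronecker

namespace Matrix

theorem mul_apply_le_mul_apply {l m n : Type*} [Fintype m] {W W' : Matrix l m ℝ≥0∞}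
    {X X' : Matrix m n ℝ≥0∞} (hW : ∀ i j, W i j ≤ W' i j) (hX : ∀ i j, X i j ≤ X' i j)
    (i : l) (j : n) : (W * X) i j ≤ (W' * X') i j := by
  simp only [mul_apply]
  gcongr with k
  exacts [hW i k, hX k j]

theorem dotProduct_mulVec_le_dotProduct_mulVec {m n : Type*} [Fintype m] [Fintype n]
    {X X' : Matrix m n ℝ≥0∞} (hX : ∀ i j, X i j ≤ X' i j) (u : m → ℝ≥0∞) (v : n → ℝ≥0∞) :
    u ⬝ᵥ X *ᵥ v ≤ u ⬝ᵥ X' *ᵥ v := by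
  simp only [dotProduct, mulVec]
  gcongr with i _ j
  exact hX i j

variable {ι : Type*} [Fintype ι] [DecidableEq ι]

theorem pow_apply_le_pow_apply {W W' : Matrix ι ι ℝ≥0∞} (h : ∀ i j, W i j ≤ W' i j) (n : ℕ)
    (i j : ι) : (W ^ n) i j ≤ (W' ^ n) i j := by
  induction n generalizing i j with
  | zero => rfl
  | succ n ih => simpa only [pow_succ] using mul_apply_le_mul_apply ih h i j

noncomputable def kstar (W : Matrix ι ι ℝ≥0∞) : Matrix ι ι ℝ≥0∞ :=
  of fun i j => ∑' n : ℕ, (W ^ n) i j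

theorem kstar_apply (W : Matrix ι ι ℝ≥0∞) (i j : ι) : W.kstar i j = ∑' n : ℕ, (W ^ n) i j :=
  rfl

theorem kstar_eq_one_add_mul (W : Matrix ι ι ℝ≥0∞) : W.kstar = 1 + W * W.kstar := by
  have hmul : ∀ i j, (W * W.kstar) i j = ∑' n : ℕ, (W ^ (n + 1)) i j := fun i j => by
    simp_rw [pow_succ', mul_apply, kstar_apply, ← ENNReal.tsum_mul_left]
    rw [← tsum_fintype (L := SummationFilter.unconditional _), ENNReal.tsum_comm]
    simp only [tsum_fintype]
  ext i j
  rw [add_apply, hmul, kstar_apply, tsum_eq_zero_add' ENNReal.summable, pow_zero]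

theorem kstar_mono {W W' : Matrix ι ι ℝ≥0∞} (h : ∀ i j, W i j ≤ W' i j) (i j : ι) :
    W.kstar i j ≤ W'.kstar i j :=
  ENNReal.tsum_le_tsum fun n => pow_apply_le_pow_apply h n i j

theorem kstar_le_of_one_add_mul_le {W X : Matrix ι ι ℝ≥0∞} (h : ∀ i j, (1 + W * X) i j ≤ X i j)
    (i j : ι) : W.kstar i j ≤ X i j := by
  have partial_sums : ∀ N i j, (∑ n ∈ Finset.range N, W ^ n) i j ≤ X i j := by
    intro N
    induction N with
    | zero => simp
    | succ N ih =>
      have geom : ∑ n ∈ Finset.range (N + 1), W ^ n = 1 + W * ∑ n ∈ Finset.range N, W ^ n := by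
        simp only [Finset.sum_range_succ', pow_succ', Finset.mul_sum, pow_zero, add_comm]
      intro i j
      refine le_trans ?_ (h i j)
      rw [geom, add_apply, add_apply]
      gcongr
      exact mul_apply_le_mul_apply (fun _ _ => le_rfl) ih i j
  rw [kstar_apply, ENNReal.tsum_eq_iSup_nat]
  exact iSup_le fun N => by simpa only [sum_apply] using partial_sums N i j

/-- The Schur-complement formula for the star of a block matrix, as an upper bound. -/
theorem kstar_fromBlocks_le {κ : Type*} [Fintype κ] [DecidableEq κ] (A : Matrix ι ι ℝ≥0∞)
    (U : Matrix ι κ ℝ≥0∞) (L : Matrix κ ι ℝ≥0∞) (B : Matrix κ κ ℝ≥0∞) {T : Matrix κ κ ℝ≥0∞}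
    {Z : Matrix ι ι ℝ≥0∞} (hT : T = 1 + B * T) (hZ : Z = 1 + (A + U * T * L) * Z) (i j) :
    (fromBlocks A U L B).kstar i j ≤
      fromBlocks Z (Z * U * T) (T * L * Z) (T + T * L * Z * U * T) i j := by
  have h₂₁ : L * Z + B * (T * L * Z) = T * L * Z := by
    conv_rhs => rw [hT]
    simp only [Matrix.add_mul, Matrix.one_mul, Matrix.mul_assoc]
  have h₁₁ : 1 + (A * Z + U * (T * L * Z)) = Z := by
    conv_rhs => rw [hZ, Matrix.add_mul]
    simp only [Matrix.mul_assoc]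
  have h₁₂ : A * (Z * U * T) + U * (T + T * L * Z * U * T) = Z * U * T := by
    conv_rhs => rw [hZ]
    simp only [Matrix.add_mul, Matrix.mul_add, Matrix.one_mul, Matrix.mul_assoc]
    abel
  have h₂₂ : 1 + (L * (Z * U * T) + B * (T + T * L * Z * U * T)) = T + T * L * Z * U * T := by
    calc 1 + (L * (Z * U * T) + B * (T + T * L * Z * U * T))
        = (1 + B * T) + (L * Z + B * (T * L * Z)) * (U * T) := by
          simp only [Matrix.add_mul, Matrix.mul_add, Matrix.mul_assoc]
          abel
      _ = T + T * L * Z * U * T := by rw [h₂₁, ← hT]; simp only [Matrix.mul_assoc]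
  refine kstar_le_of_one_add_mul_le (fun i j => le_of_eq ?_) i j
  rw [fromBlocks_multiply, ← fromBlocks_one, fromBlocks_add, h₁₁, zero_add, h₁₂, zero_add, h₂₁,
    h₂₂]

theorem sum_paths_eq_dotProduct_pow_mulVec {Q R : Type*} [Fintype Q] [DecidableEq Q]
    [CommSemiring R] (M : Matrix Q Q R) (u v : Q → R) (n : ℕ) :
    ∑ p : Fin (n + 1) → Q,
        u (p 0) * (∏ i : Fin n, M (p i.castSucc) (p i.succ)) * v (p (Fin.last n)) =
      u ⬝ᵥ (M ^ n *ᵥ v) := by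
  induction n generalizing u with
  | zero =>
    rw [← (Equiv.funUnique (Fin 1) Q).symm.sum_comp]
    simp [dotProduct]
  | succ n ih =>
    rw [pow_succ', ← mulVec_mulVec, dotProduct_mulVec, ← ih,
      ← (Fin.consEquiv fun _ => Q).sum_comp, Fintype.sum_prod_type, Finset.sum_comm]
    refine Finset.sum_congr rfl fun p _ => ?_
    simp only [Fin.consEquiv_apply, Fin.prod_univ_succ, Fin.cons_zero, Fin.cons_succ,
      Fin.castSucc_zero, ← Fin.succ_castSucc, ← Fin.succ_last, vecMul, dotProduct,
      Finset.sum_mul, mul_assoc]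

end Matrix

namespace WA

variable {α : Type}

noncomputable def mat (A : WA α) : Matrix A.Q A.Q ℝ≥0∞ := Matrix.of A.w

section ProductWithDFA

variable (A : WA α) (B : DFA' α)

theorem sum_mat_prodDFA_apply (q : A.Q) (s : B.S) (r : A.Q) :
    ∑ t : B.S, (A.prodDFA B).mat (q, s) (r, t) = A.mat q r := by
  show ∑ t : B.S, (A.prodDFA B).w (q, s) (r, t) = A.w q r
  rcases h : A.lab q r with _ | X <;> simp [prodDFA, h]

theorem mat_prodDFA_mulVec_comp_fst (v : A.Q → ℝ≥0∞) :
    (A.prodDFA B).mat *ᵥ (fun x : (A.prodDFA B).Q => v x.1) =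
      fun x : (A.prodDFA B).Q => (A.mat *ᵥ v) x.1 := by
  ext ⟨q, s⟩
  refine (Fintype.sum_prod_type _).trans ?_
  simp only [← Finset.sum_mul, sum_mat_prodDFA_apply]
  rfl

theorem mat_prodDFA_pow_mulVec_comp_fst (v : A.Q → ℝ≥0∞) (n : ℕ) :
    (A.prodDFA B).mat ^ n *ᵥ (fun x : (A.prodDFA B).Q => v x.1) =
      fun x : (A.prodDFA B).Q => (A.mat ^ n *ᵥ v) x.1 := by
  induction n with
  | zero => simp
  | succ n ih =>
    rw [pow_succ', ← mulVec_mulVec, ih, mat_prodDFA_mulVec_comp_fst, pow_succ', ← mulVec_mulVec]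

end ProductWithDFA

variable [DecidableEq α]

theorem mass_eq_tsum_sum_pathWeight (A : WA α) :
    A.mass = ∑' n : ℕ, ∑ p : Fin (n + 1) → A.Q, A.pathWeight p := by
  simp only [mass, behavior]
  rw [ENNReal.tsum_comm]
  refine tsum_congr fun n => ?_
  rw [← tsum_fintype (L := SummationFilter.unconditional _),
    ← (Equiv.sigmaFiberEquiv A.parikh).tsum_eq, ENNReal.tsum_sigma']
  rfl

theorem mass_eq_tsum_dotProduct_pow_mulVec (A : WA α) :
    A.mass = ∑' n : ℕ, A.I ⬝ᵥ (A.mat ^ n *ᵥ A.F) := by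
  simp_rw [mass_eq_tsum_sum_pathWeight, pathWeight,
    ← Matrix.sum_paths_eq_dotProduct_pow_mulVec A.mat]
  rfl

theorem mass_eq_dotProduct_kstar_mulVec (A : WA α) :
    A.mass = A.I ⬝ᵥ (A.mat.kstar *ᵥ A.F) := by
  simp only [mass_eq_tsum_dotProduct_pow_mulVec, dotProduct, mulVec, kstar_apply,
    Finset.mul_sum, ← ENNReal.tsum_mul_right, ← ENNReal.tsum_mul_left,
    Summable.tsum_finsetSum fun _ _ => ENNReal.summable]

theorem mass_le_of_kstar_le (A : WA α) {X : Matrix A.Q A.Q ℝ≥0∞}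
    (hX : ∀ i j, A.mat.kstar i j ≤ X i j) : A.mass ≤ A.I ⬝ᵥ (X *ᵥ A.F) :=
  A.mass_eq_dotProduct_kstar_mulVec ▸ dotProduct_mulVec_le_dotProduct_mulVec hX _ _

theorem mass_relabel (A : WA α) (l : A.Q → A.Q → Option α) :
    ({ A with lab := l } : WA α).mass = A.mass := by
  simp only [mass_eq_tsum_dotProduct_pow_mulVec]
  rfl

theorem mass_le_mass_of_embedding {A B : WA α} (f : A.Q → B.Q) (hf : Function.Injective f)
    (hw : ∀ q r, A.w q r ≤ B.w (f q) (f r)) (hI : ∀ q, A.I q ≤ B.I (f q))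
    (hF : ∀ q, A.F q ≤ B.F (f q)) : A.mass ≤ B.mass := by
  simp only [mass_eq_tsum_sum_pathWeight, ← tsum_fintype (L := SummationFilter.unconditional _)]
  refine ENNReal.tsum_le_tsum fun n => le_trans ?_
    (ENNReal.tsum_comp_le_tsum_of_injective hf.comp_left B.pathWeight)
  refine ENNReal.tsum_le_tsum fun p => ?_
  simp only [pathWeight, Function.comp_apply]
  gcongr with i
  exacts [hI _, hw _ _, hF _]

theorem mass_wsum_le (p q : ℝ≥0∞) (A₁ A₂ : WA α) :
    (wsum p q A₁ A₂).mass ≤ p * A₁.mass + q * A₂.mass := by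
  have hmat : (wsum p q A₁ A₂).mat = fromBlocks A₁.mat 0 0 A₂.mat := by
    ext (i | i) (j | j) <;> rfl
  have hkstar := kstar_fromBlocks_le A₁.mat 0 0 A₂.mat A₂.mat.kstar_eq_one_add_mul
    (Z := A₁.mat.kstar) (by simpa using A₁.mat.kstar_eq_one_add_mul)
  rw [← hmat] at hkstar
  refine (mass_le_of_kstar_le _ hkstar).trans_eq ?_
  have hI : (wsum p q A₁ A₂).I = Sum.elim (p • A₁.I) (q • A₂.I) := rfl
  rw [hI, show (wsum p q A₁ A₂).F = Sum.elim A₁.F A₂.F from rfl]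
  erw [fromBlocks_mulVec, sumElim_dotProduct_sumElim]
  simp [mass_eq_dotProduct_kstar_mulVec]

theorem mass_concat_le (A₁ A₂ : WA α) : (A₁.concat A₂).mass ≤ A₁.mass * A₂.mass := by
  have hmat : (A₁.concat A₂).mat = fromBlocks A₁.mat (vecMulVec A₁.F A₂.I) 0 A₂.mat := by
    ext (i | i) (j | j) <;> rfl
  have hkstar := kstar_fromBlocks_le A₁.mat (vecMulVec A₁.F A₂.I) 0 A₂.mat
    A₂.mat.kstar_eq_one_add_mul (Z := A₁.mat.kstar) (by simpa using A₁.mat.kstar_eq_one_add_mul)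
  rw [← hmat] at hkstar
  refine (mass_le_of_kstar_le _ hkstar).trans_eq ?_
  rw [show (A₁.concat A₂).I = Sum.elim A₁.I 0 from rfl,
    show (A₁.concat A₂).F = Sum.elim (0 : A₁.Q → ℝ≥0∞) A₂.F from rfl]
  erw [fromBlocks_mulVec, sumElim_dotProduct_sumElim]
  simp [mass_eq_dotProduct_kstar_mulVec, ← mulVec_mulVec, vecMulVec_mulVec, mulVec_smul,
    mul_comm]

section TransitionSubstitution

variable (A₁ : WA α) (Y : α) (A₂ : WA α)

-- The copy of `A₂` replacing the transition `q → r` of `A₁` has the states `(q, r, s)`.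

noncomputable def labelMat : Matrix A₁.Q A₁.Q ℝ≥0∞ :=
  of fun q r => if A₁.lab q r = some Y then A₁.w q r else 0

noncomputable def labelComplMat : Matrix A₁.Q A₁.Q ℝ≥0∞ :=
  of fun q r => if A₁.lab q r = some Y then 0 else A₁.w q r

noncomputable def tsubstEntry : Matrix A₁.Q (A₁.Q × A₁.Q × A₂.Q) ℝ≥0∞ :=
  of fun q x => if x.1 = q ∧ A₁.lab q x.2.1 = some Y then A₁.w q x.2.1 * A₂.I x.2.2 else 0

noncomputable def tsubstCopies (S : Matrix A₂.Q A₂.Q ℝ≥0∞) :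
    Matrix (A₁.Q × A₁.Q × A₂.Q) (A₁.Q × A₁.Q × A₂.Q) ℝ≥0∞ :=
  (1 : Matrix A₁.Q A₁.Q ℝ≥0∞) ⊗ₖ ((1 : Matrix A₁.Q A₁.Q ℝ≥0∞) ⊗ₖ S)

noncomputable def tsubstExit : Matrix (A₁.Q × A₁.Q × A₂.Q) A₁.Q ℝ≥0∞ :=
  of fun x r => if r = x.2.1 ∧ A₁.lab x.1 x.2.1 = some Y then A₂.F x.2.2 else 0

theorem mat_tsubst : (A₁.tsubst Y A₂).mat = fromBlocks (labelComplMat A₁ Y) (tsubstEntry A₁ Y A₂)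
    (tsubstExit A₁ Y A₂) (tsubstCopies A₁ A₂ A₂.mat) := by
  ext (q | ⟨q, r, s⟩) (r' | ⟨q', r', t⟩)
  · rfl
  · rfl
  · rfl
  · show (if q' = q ∧ r' = r then A₂.w s t else 0) =
      tsubstCopies A₁ A₂ A₂.mat (q, r, s) (q', r', t)
    simp only [tsubstCopies, kroneckerMap_apply, one_apply, mat, of_apply]
    split_ifs <;> simp_all

theorem tsubstEntry_mul_mul_tsubstExit (S : Matrix A₂.Q A₂.Q ℝ≥0∞) :
    tsubstEntry A₁ Y A₂ * tsubstCopies A₁ A₂ S * tsubstExit A₁ Y A₂ =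
      (A₂.I ⬝ᵥ S *ᵥ A₂.F) • labelMat A₁ Y := by
  ext q r
  simp only [tsubstEntry, tsubstCopies, tsubstExit, labelMat, mul_apply, of_apply,
    kroneckerMap_apply, one_apply, ite_and, ite_mul, one_mul, zero_mul, mul_ite, mul_zero,
    Fintype.sum_prod_type, Finset.sum_ite_irrel, Finset.sum_const_zero, Finset.sum_ite_eq',
    Finset.sum_ite_eq, Finset.mem_univ, if_true, dotProduct, mulVec, Matrix.smul_apply, smul_eq_mul]
  rw [Fintype.sum_eq_single q fun x hx => by simp [hx]]
  by_cases h : A₁.lab q r = some Y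
  · simp only [h, if_true, Finset.sum_mul, Finset.mul_sum]
    rw [Finset.sum_comm]
    exact Finset.sum_congr rfl fun _ _ => Finset.sum_congr rfl fun _ _ => by ring
  · simp only [h, if_false]

theorem mass_tsubst_le (h₂ : A₂.mass ≤ 1) : (A₁.tsubst Y A₂).mass ≤ A₁.mass := by
  set T := tsubstCopies A₁ A₂ A₂.mat.kstar
  have hT : T = 1 + tsubstCopies A₁ A₂ A₂.mat * T := by
    simp only [T, tsubstCopies, ← mul_kronecker_mul, Matrix.one_mul]
    conv_lhs => rw [A₂.mat.kstar_eq_one_add_mul]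
    rw [kronecker_add, kronecker_add, one_kronecker_one, one_kronecker_one]
  have hfold : ∀ q r,
      (labelComplMat A₁ Y + tsubstEntry A₁ Y A₂ * T * tsubstExit A₁ Y A₂) q r ≤ A₁.mat q r := by
    rw [tsubstEntry_mul_mul_tsubstExit, ← mass_eq_dotProduct_kstar_mulVec]
    intro q r
    simp only [Matrix.add_apply, Matrix.smul_apply, labelMat, labelComplMat, mat, of_apply,
      smul_eq_mul]
    split_ifs
    · simpa using mul_le_of_le_one_left' h₂
    · simp
  have hkstar := kstar_fromBlocks_le _ _ _ _ hT
    (labelComplMat A₁ Y + tsubstEntry A₁ Y A₂ * T * tsubstExit A₁ Y A₂).kstar_eq_one_add_mul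
  rw [← mat_tsubst] at hkstar
  refine (mass_le_of_kstar_le _ hkstar).trans ?_
  rw [show (A₁.tsubst Y A₂).I = Sum.elim A₁.I 0 from rfl,
    show (A₁.tsubst Y A₂).F = Sum.elim A₁.F 0 from rfl]
  erw [fromBlocks_mulVec, sumElim_dotProduct_sumElim]
  simp only [Sum.elim_comp_inl, Sum.elim_comp_inr, mulVec_zero, add_zero, zero_dotProduct]
  rw [mass_eq_dotProduct_kstar_mulVec]
  exact dotProduct_mulVec_le_dotProduct_mulVec (kstar_mono hfold) _ _

end TransitionSubstitution

section ProductWithDFA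

variable (A : WA α) (B : DFA' α)

theorem mass_prodDFA_add_mass_prodDFA_compl :
    (A.prodDFA B).mass + (A.prodDFA B.compl).mass = A.mass := by
  simp only [mass_eq_tsum_dotProduct_pow_mulVec, ← ENNReal.tsum_add]
  refine tsum_congr fun n => ?_
  have hF : (fun x : (A.prodDFA B).Q => A.F x.1) =
      (A.prodDFA B).F + fun x : (A.prodDFA B).Q => (A.prodDFA B.compl).F x := by
    ext ⟨q, s⟩
    show A.F q = (if s ∈ B.accept then A.F q else 0) + (if s ∈ B.acceptᶜ then A.F q else 0)
    by_cases hs : s ∈ B.accept <;> simp [hs]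
  calc _ = (A.prodDFA B).I ⬝ᵥ ((A.prodDFA B).mat ^ n *ᵥ fun x : (A.prodDFA B).Q => A.F x.1) := by
        rw [hF, mulVec_add, dotProduct_add]
        rfl
    _ = A.I ⬝ᵥ (A.mat ^ n *ᵥ A.F) := by
        rw [mat_prodDFA_pow_mulVec_comp_fst]
        refine (Fintype.sum_prod_type _).trans ?_
        simp [prodDFA, dotProduct]

theorem mass_prodDFA_le : (A.prodDFA B).mass ≤ A.mass :=
  (mass_prodDFA_add_mass_prodDFA_compl A B) ▸ le_self_add

end ProductWithDFA

theorem mass_subst0_le_mass_prodDFA_compl (A : WA α) (X : α) :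
    (A.subst0 X).mass ≤ (A.prodDFA (BXpos X).compl).mass := by
  refine mass_le_mass_of_embedding (fun q => (q, false)) (fun q r h => congrArg Prod.fst h)
    (fun q r => ?_) (fun q => le_of_eq ?_) (fun q => le_of_eq ?_)
  · show (if A.lab q r = some X then 0 else A.w q r) ≤ (A.prodDFA (BXpos X).compl).w _ _
    rcases h : A.lab q r with _ | Y
    · simp only [prodDFA, h]
      exact le_of_eq (if_pos rfl).symm
    · by_cases hY : Y = X <;> simp [prodDFA, BXpos, DFA'.compl, h, hY]
  · simp [prodDFA, BXpos, DFA'.compl, subst0]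
  · simp [prodDFA, BXpos, DFA'.compl, subst0]

theorem mass_decrA_le (A : WA α) (X : α) : (A.decrA X).mass ≤ A.mass := by
  calc (A.decrA X).mass
      ≤ 1 * (A.prodDFA (BXpos X)).mass + 1 * (A.subst0 X).mass :=
        (mass_wsum_le 1 1 _ _).trans_eq (by rw [mass_relabel])
    _ ≤ (A.prodDFA (BXpos X)).mass + (A.prodDFA (BXpos X).compl).mass := by
        rw [one_mul, one_mul]
        gcongr
        exact mass_subst0_le_mass_prodDFA_compl A X
    _ = A.mass := mass_prodDFA_add_mass_prodDFA_compl A _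

end WA

noncomputable def chainMat (n : ℕ) : Matrix (Fin (n + 1)) (Fin (n + 1)) ℝ≥0∞ :=
  of fun i j => if (j : ℕ) = i + 1 then 1 else 0

theorem chainMat_pow_apply (n k : ℕ) (i j : Fin (n + 1)) :
    (chainMat n ^ k) i j = if (j : ℕ) = i + k then 1 else 0 := by
  induction k generalizing j with
  | zero => simp [one_apply, Fin.ext_iff, eq_comm]
  | succ k ih =>
    rw [pow_succ, mul_apply]
    simp only [ih]
    simp only [chainMat, of_apply, ite_mul, one_mul, zero_mul]
    by_cases hik : (i : ℕ) + k ≤ n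
    · rw [Fintype.sum_eq_single ⟨i + k, by omega⟩ fun x hx => if_neg fun h => hx (Fin.ext h)]
      simp [add_assoc]
    · rw [Finset.sum_eq_zero fun x _ => if_neg (by omega), if_neg (by omega)]

theorem mass_chainX {α : Type} [DecidableEq α] (X : α) (n : ℕ) : (chainX X n).mass = 1 := by
  rw [WA.mass_eq_tsum_dotProduct_pow_mulVec]
  show ∑' k, (fun i : Fin (n + 1) => if i = 0 then 1 else 0) ⬝ᵥ
    (chainMat n ^ k *ᵥ fun i => if i = Fin.last n then 1 else 0) = 1
  simp only [dotProduct, mulVec, chainMat_pow_apply, Fin.val_last, mul_ite, mul_one, mul_zero,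
    Finset.sum_ite_eq', Finset.mem_univ, if_true]
  have hterm : ∀ k,
      ∑ x : Fin (n + 1), (if n = x + k then if x = 0 then (1 : ℝ≥0∞) else 0 else 0) =
        if k = n then 1 else 0 := fun k => by
    rw [Fintype.sum_eq_single 0 fun x hx => by simp [hx]]
    simp [eq_comm]
  simp only [hterm, tsum_ite_eq]

theorem mass_chainYX {α : Type} [DecidableEq α] (Y X : α) : (chainYX Y X).mass = 1 :=
  (WA.mass_relabel (chainX X 2) (chainYX Y X).lab).trans (mass_chainX X 2)

theorem ReDiP.mass_sem_le {α : Type} [DecidableEq α] (P : ReDiP α) (hP : P.wf) (A : WA α) :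
    (P.sem A).mass ≤ A.mass := by
  induction P generalizing A with
  | setzero x => exact (WA.mass_relabel A _).le
  | incrConst x n => exact (A.mass_concat_le _).trans_eq (by rw [mass_chainX, mul_one])
  | incrDist x D => exact (A.mass_concat_le _).trans_eq (by rw [hP.1, mul_one])
  | incrVar x y => exact A.mass_tsubst_le y _ (mass_chainYX y x).le
  | iid x D y =>
    refine A.mass_tsubst_le y _ ((WA.mass_concat_le _ _).trans ?_)
    simp [singleY, mass_chainX, hP.1]
  | decr x => exact A.mass_decrA_le x
  | choice p P₁ P₂ ih₁ ih₂ =>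
    obtain ⟨hp, h₁, h₂⟩ := hP
    calc (WA.wsum p (1 - p) (P₁.sem A) (P₂.sem A)).mass
        ≤ p * (P₁.sem A).mass + (1 - p) * (P₂.sem A).mass := WA.mass_wsum_le _ _ _ _
      _ ≤ p * A.mass + (1 - p) * A.mass := by gcongr <;> [exact ih₁ h₁ A; exact ih₂ h₂ A]
      _ = A.mass := by rw [← add_mul, add_tsub_cancel_of_le hp, one_mul]
  | ite φ P₁ P₂ ih₁ ih₂ =>
    calc _ ≤ 1 * (P₁.sem (A.prodDFA φ.dfa)).mass + 1 * (P₂.sem (A.prodDFA φ.dfa.compl)).mass :=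
          WA.mass_wsum_le _ _ _ _
      _ ≤ (A.prodDFA φ.dfa).mass + (A.prodDFA φ.dfa.compl).mass := by
          rw [one_mul, one_mul]
          exact add_le_add (ih₁ hP.1 _) (ih₂ hP.2 _)
      _ = A.mass := A.mass_prodDFA_add_mass_prodDFA_compl φ.dfa
  | observe φ => exact A.mass_prodDFA_le φ.dfa
  | seq P₁ P₂ ih₁ ih₂ => exact (ih₂ hP.2 _).trans (ih₁ hP.1 A)

theorem stmt_12_general (V : Type) [DecidableEq V] (P : ReDiP V) (hP : P.wf)
    (A : WA V) (hA : A.mass ≤ 1) :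
    (P.sem A).mass ≤ 1 :=
  (P.mass_sem_le hP A).trans hA

/-- the translation is an endofunction on PGA. -/
theorem stmt_12 (V : Type) [Fintype V] [DecidableEq V] (P : ReDiP V) (hP : P.wf)
    (A : WA V) (hA : A.mass ≤ 1) :
    (P.sem A).mass ≤ 1 :=
  stmt_12_general V P hP A hA
end

section
/- For every guard φ over V in which every constant occurring in an atom (the n of X < n and the m of X ≡ n mod m) is at most N, there exists a DFA over alphabet V with at most (N+1)^{a(φ)} states that accepts exactly the words w : List V whose Parikh image satisfies φ, where a(φ) is the number of atomic subformulas of φ. -/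
open scoped ENNReal
open Classical

variable {V : Type} [Fintype V] [DecidableEq V]

section

variable {α : Type}

theorem DFA'.inter_foldl (B C : DFA' α) (w : List α) (s : B.S) (t : C.S) :
    w.foldl (B.inter C).step (s, t) = (w.foldl B.step s, w.foldl C.step t) := by
  induction w generalizing s t with
  | nil => rfl
  | cons a w ih => exact ih (B.step s a) (C.step t a)

theorem DFA'.inter_accepts_iff (B C : DFA' α) (w : List α) :
    (B.inter C).Accepts w ↔ B.Accepts w ∧ C.Accepts w :=
  (congrArg (· ∈ B.accept ×ˢ C.accept) (DFA'.inter_foldl B C w B.start C.start)).to_iff.trans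
    Finset.mem_product

theorem DFA'.compl_accepts_iff (B : DFA' α) (w : List α) :
    B.compl.Accepts w ↔ ¬B.Accepts w :=
  Finset.mem_compl

-- The state types of `ltDFA` and `modDFA` are `Fin _` only up to unfolding, hence the
-- explicit `Fin.val (n := _)` and the `change`s below.
theorem ltDFA_foldl_val [DecidableEq α] (X : α) (n : ℕ) (w : List α) (s : (ltDFA X n).S) :
    Fin.val (n := n + 1) (w.foldl (ltDFA X n).step s) =
      min (Fin.val (n := n + 1) s + w.count X) n := by
  induction w generalizing s with
  | nil =>
    have hs : Fin.val (n := n + 1) s < n + 1 := s.isLt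
    change Fin.val (n := n + 1) s = min (Fin.val (n := n + 1) s + 0) n
    omega
  | cons a w ih =>
    refine (ih _).trans ?_
    rw [List.count_cons]
    by_cases ha : a = X
    · subst ha
      by_cases hs : Fin.val (n := n + 1) s < n <;>
        simp only [ltDFA, ↓reduceIte, hs, ↓reduceDIte, BEq.rfl] <;> omega
    · simp only [ltDFA, ha, beq_iff_eq, ↓reduceIte, Nat.add_zero]

theorem ltDFA_accepts_iff [DecidableEq α] (X : α) (n : ℕ) (w : List α) :
    (ltDFA X n).Accepts w ↔ w.count X < n := by
  refine Finset.mem_filter.trans ((and_iff_right (Finset.mem_univ _)).trans ?_)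
  change Fin.val (n := n + 1) (w.foldl (ltDFA X n).step (ltDFA X n).start) < n ↔ _
  rw [ltDFA_foldl_val]
  change min (0 + w.count X) n < n ↔ _
  rw [Nat.zero_add, min_lt_iff, or_iff_left (lt_irrefl n)]

theorem modDFA_foldl_val [DecidableEq α] (X : α) (n m : ℕ) (h : n < m) (w : List α)
    (s : (modDFA X n m h).S) :
    Fin.val (n := m) (w.foldl (modDFA X n m h).step s) = (Fin.val (n := m) s + w.count X) % m := by
  induction w generalizing s with
  | nil => exact (Nat.mod_eq_of_lt s.isLt).symm
  | cons a w ih =>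
    refine (ih _).trans ?_
    rw [List.count_cons]
    by_cases ha : a = X
    · subst ha
      simp only [modDFA, ↓reduceIte, Nat.mod_add_mod, BEq.rfl]
      congr 1
      omega
    · simp only [modDFA, ha, beq_iff_eq, ↓reduceIte, Nat.add_zero]

theorem modDFA_accepts_iff [DecidableEq α] (X : α) (n m : ℕ) (h : n < m) (w : List α) :
    (modDFA X n m h).Accepts w ↔ w.count X % m = n := by
  refine Finset.mem_singleton.trans (Fin.ext_iff.trans ?_)
  change Fin.val (n := m) (w.foldl (modDFA X n m h).step (modDFA X n m h).start) = n ↔ _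
  rw [modDFA_foldl_val]
  change (0 + w.count X) % m = n ↔ _
  rw [Nat.zero_add]

theorem Guard.dfa_accepts_iff [DecidableEq α] (φ : Guard α) (w : List α) :
    φ.dfa.Accepts w ↔ φ.sat (parikhWord w) := by
  induction φ with
  | lt X n => exact ltDFA_accepts_iff X n w
  | mod X n m h => exact modDFA_accepts_iff X n m h w
  | and φ₁ φ₂ ih₁ ih₂ => exact (DFA'.inter_accepts_iff _ _ w).trans (and_congr ih₁ ih₂)
  | not φ ih => exact (DFA'.compl_accepts_iff _ w).trans (not_congr ih)

theorem Guard.card_dfa_le [DecidableEq α] {N : ℕ} {φ : Guard α} (hφ : φ.constLe N) :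
    Nat.card φ.dfa.S ≤ (N + 1) ^ φ.atoms := by
  induction φ with
  | lt X n =>
    simpa [Guard.dfa, ltDFA, Guard.atoms] using Nat.succ_le_succ (show n ≤ N from hφ)
  | mod X n m h =>
    simpa [Guard.dfa, modDFA, Guard.atoms] using Nat.le_succ_of_le hφ.2
  | and φ₁ φ₂ ih₁ ih₂ =>
    rw [Guard.atoms, pow_add]
    exact (Nat.card_prod _ _).trans_le (Nat.mul_le_mul (ih₁ hφ.1) (ih₂ hφ.2))
  | not φ ih => exact ih hφ

end

theorem stmt_14_general (V : Type) [DecidableEq V] (φ : Guard V) (N : ℕ)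
    (hφ : φ.constLe N) :
    ∃ B : DFA' V, Nat.card B.S ≤ (N + 1) ^ φ.atoms ∧
      ∀ w : List V, B.Accepts w ↔ φ.sat (parikhWord w) :=
  ⟨φ.dfa, Guard.card_dfa_le hφ, φ.dfa_accepts_iff⟩

/-- every guard with constants at most `N` is modeled by a DFA with at most
`(N+1)^{a(φ)}` states. -/
theorem stmt_14 (V : Type) [Fintype V] [DecidableEq V] (φ : Guard V) (N : ℕ)
    (hφ : φ.constLe N) :
    ∃ B : DFA' V, Nat.card B.S ≤ (N + 1) ^ φ.atoms ∧
      ∀ w : List V, B.Accepts w ↔ φ.sat (parikhWord w) :=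
  stmt_14_general V φ N hφ
end
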